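/- Let k ∈ ℤ∖{0}, m,n ∈ ℤ, and let f : ℝ² → ℂ satisfy Σ_{a,b∈ℤ} |f(x+a,t+b)| < ∞ for every (x,t) ∈ ℝ². Then ϑ_k^{m,n}f satisfies the pseudoperiodicity relations, for all (x,y,z,t) ∈ ℝ⁴: (ϑ_k^{m,n}f)(x+1,y,z,t) = (ϑ_k^{m,n}f)(x,y,z,t); (ϑ_k^{m,n}f)(x,y+1,z−x,t) = e^{−2πikx²}·(ϑ_k^{m,n}f)(x,y,z,t); (ϑ_k^{m,n}f)(x,y,z+1,t) = e^{4πikx}·(ϑ_k^{m,n}f)(x,y,z,t); and (ϑ_k^{m,n}f)(x,y,z,t+1) = e^{4πiky}·(ϑ_k^{m,n}f)(x,y,z,t). -/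
import Mathlib


noncomputable section

/-- The function `ϑ_k^{m,n}f : ℝ⁴ → ℂ`:
`(ϑ_k^{m,n}f)(x,y,z,t) = e^{−2πi(my−n(z+xy))}·e^{4πikzx}·
  Σ_{a,b∈ℤ} e^{2πinya}·e^{−4πik(by−za−(y/2)(x+a)²)}·f(x+a,t+b)`. -/
def thetaF (k m n : ℤ) (f : ℝ × ℝ → ℂ) (x y z t : ℝ) : ℂ :=
  Complex.exp (Complex.I *
      ((-2) * Real.pi * ((m : ℝ) * y - (n : ℝ) * (z + x * y)) : ℝ)) *
    Complex.exp (Complex.I * (4 * Real.pi * (k : ℝ) * (z * x) : ℝ)) *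
    ∑' ab : ℤ × ℤ,
      Complex.exp (Complex.I *
          (2 * Real.pi * (n : ℝ) * y * (ab.1 : ℝ) : ℝ)) *
        Complex.exp (Complex.I *
          ((-4) * Real.pi * (k : ℝ) *
            ((ab.2 : ℝ) * y - z * (ab.1 : ℝ) - (y / 2) * (x + (ab.1 : ℝ)) ^ 2) : ℝ)) *
        f (x + (ab.1 : ℝ), t + (ab.2 : ℝ))

/-- `E r = exp(i r)` for real `r`. -/
def E (r : ℝ) : ℂ := Complex.exp (Complex.I * r)

lemma E_mul (r s : ℝ) : E r * E s = E (r + s) := by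
  unfold E
  rw [← Complex.exp_add]
  push_cast
  ring_nf

lemma E_shift (s : ℝ) (N : ℤ) : E (s + 2 * Real.pi * N) = E s := by
  unfold E
  push_cast
  rw [mul_add, Complex.exp_add]
  have : Complex.I * (2 * (Real.pi : ℂ) * (N : ℂ)) = (N : ℂ) * (2 * (Real.pi : ℂ) * Complex.I) := by
    ring
  rw [this, Complex.exp_int_mul_two_pi_mul_I, mul_one]

lemma E_congr {r s : ℝ} (h : r = s) : E r = E s := by rw [h]

/-- The total phase of the summand, including the prefactors. -/
def Phi (k m n : ℤ) (x y z : ℝ) (ab : ℤ × ℤ) : ℝ :=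
  (-2) * Real.pi * ((m : ℝ) * y - (n : ℝ) * (z + x * y)) + 4 * Real.pi * (k : ℝ) * (z * x)
    + (2 * Real.pi * (n : ℝ) * y * (ab.1 : ℝ)
      + (-4) * Real.pi * (k : ℝ) *
          ((ab.2 : ℝ) * y - z * (ab.1 : ℝ) - (y / 2) * (x + (ab.1 : ℝ)) ^ 2))

lemma thetaF_eq (k m n : ℤ) (f : ℝ × ℝ → ℂ) (x y z t : ℝ) :
    thetaF k m n f x y z t =
      ∑' ab : ℤ × ℤ, E (Phi k m n x y z ab) * f (x + (ab.1 : ℝ), t + (ab.2 : ℝ)) := by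
  unfold thetaF
  rw [show ∀ a b : ℂ, ∀ c : ℂ, a * b * c = (a * b) * c from fun _ _ _ => rfl]
  rw [show (Complex.exp (Complex.I *
      ((-2) * Real.pi * ((m : ℝ) * y - (n : ℝ) * (z + x * y)) : ℝ)) *
    Complex.exp (Complex.I * (4 * Real.pi * (k : ℝ) * (z * x) : ℝ)))
    = E ((-2) * Real.pi * ((m : ℝ) * y - (n : ℝ) * (z + x * y))
        + 4 * Real.pi * (k : ℝ) * (z * x)) from E_mul _ _]
  rw [← tsum_mul_left]
  refine tsum_congr fun ab => ?_
  have h1 : Complex.exp (Complex.I *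
          (2 * Real.pi * (n : ℝ) * y * (ab.1 : ℝ) : ℝ)) = E (2 * Real.pi * (n : ℝ) * y * (ab.1 : ℝ)) := rfl
  have h2 : Complex.exp (Complex.I *
          ((-4) * Real.pi * (k : ℝ) *
            ((ab.2 : ℝ) * y - z * (ab.1 : ℝ) - (y / 2) * (x + (ab.1 : ℝ)) ^ 2) : ℝ))
      = E ((-4) * Real.pi * (k : ℝ) *
            ((ab.2 : ℝ) * y - z * (ab.1 : ℝ) - (y / 2) * (x + (ab.1 : ℝ)) ^ 2)) := rfl
  rw [h1, h2, ← mul_assoc, ← mul_assoc, E_mul, E_mul]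
  exact congrArg (· * f (x + (ab.1 : ℝ), t + (ab.2 : ℝ))) (E_congr (by unfold Phi; ring))

/-- Pseudoperiodicity of `ϑ_k^{m,n}f` with respect to the integer lattice. -/
theorem stmt15 (k m n : ℤ) (hk : k ≠ 0) (f : ℝ × ℝ → ℂ)
    (hf : ∀ x t : ℝ,
      Summable fun ab : ℤ × ℤ => ‖f (x + (ab.1 : ℝ), t + (ab.2 : ℝ))‖) :
    ∀ x y z t : ℝ,
      thetaF k m n f (x + 1) y z t = thetaF k m n f x y z t ∧
      thetaF k m n f x (y + 1) (z - x) t =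
        Complex.exp (Complex.I * ((-2) * Real.pi * (k : ℝ) * x ^ 2 : ℝ)) *
          thetaF k m n f x y z t ∧
      thetaF k m n f x y (z + 1) t =
        Complex.exp (Complex.I * (4 * Real.pi * (k : ℝ) * x : ℝ)) *
          thetaF k m n f x y z t ∧
      thetaF k m n f x y z (t + 1) =
        Complex.exp (Complex.I * (4 * Real.pi * (k : ℝ) * y : ℝ)) *
          thetaF k m n f x y z t := by
  intro x y z t
  refine ⟨?_, ?_, ?_, ?_⟩
  · -- x ↦ x + 1
    rw [thetaF_eq, thetaF_eq]
    rw [← ((Equiv.addRight (1 : ℤ)).prodCongr (Equiv.refl ℤ)).tsum_eq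
      (fun ab : ℤ × ℤ => E (Phi k m n x y z ab) * f (x + (ab.1 : ℝ), t + (ab.2 : ℝ)))]
    refine tsum_congr fun ab => ?_
    simp only [Equiv.prodCongr_apply, Equiv.coe_addRight, Equiv.refl_apply, Prod.map]
    have harg : x + 1 + (ab.1 : ℝ) = x + ((ab.1 + 1 : ℤ) : ℝ) := by push_cast; ring
    rw [harg]
    congr 1
    refine E_congr ?_
    unfold Phi
    push_cast
    ring
  · -- y ↦ y + 1, z ↦ z - x
    rw [thetaF_eq, thetaF_eq, ← tsum_mul_left]
    refine tsum_congr fun ab => ?_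
    rw [← mul_assoc]
    congr 1
    rw [show Complex.exp (Complex.I * ((-2) * Real.pi * (k : ℝ) * x ^ 2 : ℝ))
      = E ((-2) * Real.pi * (k : ℝ) * x ^ 2) from rfl, E_mul]
    rw [show Phi k m n x (y + 1) (z - x) ab
      = ((-2) * Real.pi * (k : ℝ) * x ^ 2 + Phi k m n x y z ab)
        + 2 * Real.pi * ((n * ab.1 - m - 2 * k * ab.2 + k * ab.1 ^ 2 : ℤ) : ℝ) from by
      unfold Phi; push_cast; ring]
    exact E_shift _ _
  · -- z ↦ z + 1
    rw [thetaF_eq, thetaF_eq, ← tsum_mul_left]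
    refine tsum_congr fun ab => ?_
    rw [← mul_assoc]
    congr 1
    rw [show Complex.exp (Complex.I * (4 * Real.pi * (k : ℝ) * x : ℝ))
      = E (4 * Real.pi * (k : ℝ) * x) from rfl, E_mul]
    rw [show Phi k m n x y (z + 1) ab
      = (4 * Real.pi * (k : ℝ) * x + Phi k m n x y z ab)
        + 2 * Real.pi * ((n + 2 * k * ab.1 : ℤ) : ℝ) from by
      unfold Phi; push_cast; ring]
    exact E_shift _ _
  · -- t ↦ t + 1
    rw [thetaF_eq, thetaF_eq, ← tsum_mul_left]
    rw [← ((Equiv.refl ℤ).prodCongr (Equiv.addRight (1 : ℤ))).tsum_eq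
      (fun ab : ℤ × ℤ => Complex.exp (Complex.I * (4 * Real.pi * (k : ℝ) * y : ℝ)) *
        (E (Phi k m n x y z ab) * f (x + (ab.1 : ℝ), t + (ab.2 : ℝ))))]
    refine tsum_congr fun ab => ?_
    simp only [Equiv.prodCongr_apply, Equiv.coe_addRight, Equiv.refl_apply, Prod.map]
    rw [← mul_assoc]
    have harg : t + 1 + (ab.2 : ℝ) = t + ((ab.2 + 1 : ℤ) : ℝ) := by push_cast; ring
    rw [harg]
    congr 1
    rw [show Complex.exp (Complex.I * (4 * Real.pi * (k : ℝ) * y : ℝ))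
      = E (4 * Real.pi * (k : ℝ) * y) from rfl, E_mul]
    refine E_congr ?_
    unfold Phi
    push_cast
    ring

end
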